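/- (Inductive expected-velocity bound, α < 1.) Consider an HL-flock with random interactions satisfying Condition (K) with p ∈ (0,1] and 0 < α < 1, with v0 > 0. Set A0 = 1 + 2x0, B0 = 2h v0 and κ = hp/((1−α)B0). Then for every ℓ = 2,…,k there exists a constant C_ℓ > 0 such that for all t ≥ 1, E‖v_ℓ[t]‖ ≤ C_ℓ · t^{ℓ−2} · exp( −κ (A0 + B0 t)^{1−α} ). -/

import Mathlib

open MeasureTheory Finset Filter

set_option maxHeartbeats 2000000

/-- Inductive expected-velocity bound, case `α < 1`: under Condition (K) with
`p ∈ (0,1]`, `0 < α < 1` and `v0 = ‖v[0]‖∞ > 0`, setting `A0 = 1 + 2 x0`,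
`B0 = 2 h v0` and `κ = hp/((1−α)B0)`, for every bird `ℓ = 2,…,k` (zero-based index
`ℓ.val = ℓ − 1 ≥ 1`) there is a constant `C_ℓ > 0` with, for all `t ≥ 1`,
`E‖v_ℓ[t]‖ ≤ C_ℓ t^{ℓ−2} exp(−κ (A0 + B0 t)^{1−α})`. -/
theorem inductive_velocity_bound_alpha_lt_one
    (k : ℕ) (hk : 2 ≤ k)
    (Ω : Type*) [m0 : MeasurableSpace Ω]
    (μ : Measure Ω) [IsProbabilityMeasure μ]
    (F : ℕ → MeasurableSpace Ω)
    (hFle : ∀ t, F t ≤ m0) (hFmono : Monotone F)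
    (x v : ℕ → Ω → Fin k → EuclideanSpace ℝ (Fin 3))
    (L : Fin k → Finset (Fin k))
    (a : ℕ → Ω → Fin k → Fin k → ℝ)
    (h : ℝ) (hh0 : 0 < h) (hh1 : h ≤ 1 / ((k : ℝ) - 1))
    (hLlt : ∀ i : Fin k, ∀ j ∈ L i, j < i)
    (hLne : ∀ i : Fin k, 0 < i.val → (L i).Nonempty)
    (ha0 : ∀ t ω, ∀ i : Fin k, ∀ j ∈ L i, 0 ≤ a t ω i j)
    (ha1 : ∀ t ω, ∀ i : Fin k, ∀ j ∈ L i, a t ω i j ≤ 1)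
    (hxmeas : ∀ t, Measurable[F t] (x t))
    (hvmeas : ∀ t, Measurable[F t] (v t))
    (hameas : ∀ t, ∀ i : Fin k, ∀ j ∈ L i, Measurable[F t] (fun ω => a t ω i j))
    (hxdyn : ∀ t ω i, x (t + 1) ω i = x t ω i + h • v t ω i)
    (hvdyn : ∀ t ω i, v (t + 1) ω i =
      v t ω i + h • ∑ j ∈ L i, a (t + 1) ω i j • (v t ω j - v t ω i))
    (X0 V0 : Fin k → EuclideanSpace ℝ (Fin 3))
    (hX0 : ∀ ω, x 0 ω = X0) (hV0 : ∀ ω, v 0 ω = V0)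
    (hX0z : X0 ⟨0, by omega⟩ = 0) (hV0z : V0 ⟨0, by omega⟩ = 0)
    (p : ℝ) (hp0 : 0 < p) (hp1 : p ≤ 1)
    (α : ℝ) (hα0 : 0 < α) (hα1 : α < 1)
    (hK : ∀ t : ℕ, ∀ i : Fin k, ∀ j ∈ L i,
      ∀ᵐ ω ∂μ, p / (1 + ‖x t ω i - x t ω j‖) ^ α ≤
        (μ[fun ω' => a (t + 1) ω' i j | F t]) ω)
    (hv0pos : 0 < ‖V0‖) :
    ∀ ℓ : Fin k, 1 ≤ ℓ.val → ∃ C : ℝ, 0 < C ∧ ∀ t : ℕ, 1 ≤ t →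
      ∫ ω, ‖v t ω ℓ‖ ∂μ ≤
        C * (t : ℝ) ^ (ℓ.val - 1) *
          Real.exp (-(h * p / ((1 - α) * (2 * h * ‖V0‖))) *
            (1 + 2 * ‖X0‖ + 2 * h * ‖V0‖ * t) ^ (1 - α)) := by

  classical
  -- ## scalar preliminaries
  have hk1 : (1:ℝ) ≤ (k:ℝ) - 1 := by
    have h2 : (2:ℝ) ≤ (k:ℝ) := by exact_mod_cast hk
    linarith
  have hh1' : h ≤ 1 := by
    refine le_trans hh1 ?_
    rw [div_le_one (by linarith)]; linarith
  set D : ℕ → ℝ := fun t => 1 + 2 * ‖X0‖ + 2 * h * ‖V0‖ * t with hDdef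
  set κ : ℝ := h * p / ((1 - α) * (2 * h * ‖V0‖)) with hκdef
  set G : ℕ → ℝ := fun t => Real.exp (-κ * D t ^ (1 - α)) with hGdef
  have hβ : 0 < 1 - α := by linarith
  have hB0 : 0 < 2 * h * ‖V0‖ := by positivity
  have hκ0 : 0 < κ := by rw [hκdef]; positivity
  have hD1 : ∀ t : ℕ, 1 ≤ D t := by
    intro t
    have ht0 : (0:ℝ) ≤ (t:ℝ) := Nat.cast_nonneg t
    have := norm_nonneg X0
    simp only [hDdef]
    nlinarith [hB0]
  have hDpos : ∀ t : ℕ, 0 < D t := fun t => lt_of_lt_of_le one_pos (hD1 t)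
  have hGpos : ∀ t : ℕ, 0 < G t := fun t => Real.exp_pos _
  have hDα1 : ∀ t : ℕ, 1 ≤ D t ^ α := by
    intro t
    calc (1:ℝ) = 1 ^ α := (Real.one_rpow α).symm
    _ ≤ D t ^ α := Real.rpow_le_rpow zero_le_one (hD1 t) hα0.le
  have hq0 : ∀ t : ℕ, 0 ≤ h * p / D t ^ α := by
    intro t
    have := Real.rpow_pos_of_pos (hDpos t) α
    positivity
  have hqhp : ∀ t : ℕ, h * p / D t ^ α ≤ h * p :=
    fun t => div_le_self (by positivity) (hDα1 t)
  have hq1 : ∀ t : ℕ, h * p / D t ^ α ≤ 1 := by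
    intro t
    refine le_trans (hqhp t) ?_
    nlinarith
  -- ## structural facts on the flock
  have hL0 : ∀ i : Fin k, i.val = 0 → L i = ∅ := by
    intro i hi
    rw [Finset.eq_empty_iff_forall_notMem]
    intro j hj
    have := hLlt i j hj
    rw [Fin.lt_def, hi] at this
    omega
  have hvz : ∀ (t : ℕ) ω (i : Fin k), i.val = 0 → v t ω i = 0 := by
    intro t
    induction t with
    | zero =>
      intro ω i hi
      have hie : i = ⟨0, by omega⟩ := Fin.ext (by simpa using hi)
      rw [hV0, hie, hV0z]
    | succ t IHt =>
      intro ω i hi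
      rw [hvdyn, hL0 i hi]
      simp [IHt ω i hi]
  have hScard : ∀ (t : ℕ) ω (i : Fin k), ∑ j ∈ L i, a t ω i j ≤ (k:ℝ) - 1 := by
    intro t ω i
    have hsub : L i ⊆ Finset.univ.erase i := by
      intro j hj
      exact Finset.mem_erase.mpr ⟨Fin.ne_of_lt (hLlt i j hj), Finset.mem_univ j⟩
    have hcard : (L i).card ≤ k - 1 := by
      have := Finset.card_le_card hsub
      simpa [Finset.card_erase_of_mem] using this
    calc ∑ j ∈ L i, a t ω i j ≤ (L i).card • (1:ℝ) :=
          Finset.sum_le_card_nsmul _ _ 1 (fun j hj => ha1 t ω i j hj)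
    _ = ((L i).card : ℝ) := by simp
    _ ≤ ((k - 1 : ℕ) : ℝ) := by exact_mod_cast hcard
    _ ≤ (k:ℝ) - 1 := by
        rw [Nat.cast_sub (by omega)]; simp
  have hhS : ∀ (t : ℕ) ω (i : Fin k), h * (∑ j ∈ L i, a t ω i j) ≤ 1 := by
    intro t ω i
    calc h * (∑ j ∈ L i, a t ω i j) ≤ h * ((k:ℝ) - 1) :=
          mul_le_mul_of_nonneg_left (hScard t ω i) hh0.le
    _ ≤ (1 / ((k:ℝ) - 1)) * ((k:ℝ) - 1) :=
          mul_le_mul_of_nonneg_right hh1 (by linarith)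
    _ = 1 := by field_simp
  have hSnn : ∀ (t : ℕ) ω (i : Fin k), 0 ≤ ∑ j ∈ L i, a t ω i j :=
    fun t ω i => Finset.sum_nonneg fun j hj => ha0 t ω i j hj
  -- ## dynamics identity and pointwise bounds
  have hid : ∀ (t : ℕ) ω (i : Fin k), v (t+1) ω i
      = (1 - h * ∑ j ∈ L i, a (t+1) ω i j) • v t ω i
        + ∑ j ∈ L i, (h * a (t+1) ω i j) • v t ω j := by
    intro t ω i
    rw [hvdyn]
    rw [Finset.smul_sum]
    simp only [smul_sub, smul_smul]
    rw [Finset.sum_sub_distrib, ← Finset.sum_smul, sub_smul, one_smul, Finset.mul_sum]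
    abel
  have hnorm1 : ∀ (t : ℕ) ω (i : Fin k), ‖v (t+1) ω i‖
      ≤ (1 - h * ∑ j ∈ L i, a (t+1) ω i j) * ‖v t ω i‖
        + ∑ j ∈ L i, (h * a (t+1) ω i j) * ‖v t ω j‖ := by
    intro t ω i
    rw [hid t ω i]
    refine le_trans (norm_add_le _ _) (add_le_add ?_ ?_)
    · rw [norm_smul, Real.norm_eq_abs, abs_of_nonneg (by linarith [hhS (t+1) ω i])]
    · refine le_trans (norm_sum_le _ _) (le_of_eq ?_)
      refine Finset.sum_congr rfl fun j hj => ?_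
      rw [norm_smul, Real.norm_eq_abs,
        abs_of_nonneg (by have := ha0 (t+1) ω i j hj; positivity)]
  have hvb : ∀ (t : ℕ) ω (i : Fin k), ‖v t ω i‖ ≤ ‖V0‖ := by
    intro t
    induction t with
    | zero => intro ω i; rw [hV0]; exact norm_le_pi_norm V0 i
    | succ t IHt =>
      intro ω i
      refine le_trans (hnorm1 t ω i) ?_
      have h1S : 0 ≤ 1 - h * ∑ j ∈ L i, a (t+1) ω i j := by linarith [hhS (t+1) ω i]
      calc (1 - h * ∑ j ∈ L i, a (t+1) ω i j) * ‖v t ω i‖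
            + ∑ j ∈ L i, (h * a (t+1) ω i j) * ‖v t ω j‖
          ≤ (1 - h * ∑ j ∈ L i, a (t+1) ω i j) * ‖V0‖
            + ∑ j ∈ L i, (h * a (t+1) ω i j) * ‖V0‖ := by
            refine add_le_add (mul_le_mul_of_nonneg_left (IHt ω i) h1S) ?_
            refine Finset.sum_le_sum fun j hj => ?_
            exact mul_le_mul_of_nonneg_left (IHt ω j)
              (by have := ha0 (t+1) ω i j hj; positivity)
      _ = ‖V0‖ := by
            rw [← Finset.sum_mul, ← Finset.mul_sum]; ring
  have hxb : ∀ (t : ℕ) ω (i : Fin k), ‖x t ω i‖ ≤ ‖X0‖ + t * (h * ‖V0‖) := by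
    intro t
    induction t with
    | zero => intro ω i; rw [hX0]; simpa using norm_le_pi_norm X0 i
    | succ t IHt =>
      intro ω i
      rw [hxdyn]
      refine le_trans (norm_add_le _ _) ?_
      rw [norm_smul, Real.norm_eq_abs, abs_of_nonneg hh0.le]
      have h1 := IHt ω i
      have h2 := hvb t ω i
      have h3 : h * ‖v t ω i‖ ≤ h * ‖V0‖ := mul_le_mul_of_nonneg_left h2 hh0.le
      push_cast
      linarith
  have hxd : ∀ (t : ℕ) ω (i j : Fin k), 1 + ‖x t ω i - x t ω j‖ ≤ D t := by
    intro t ω i j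
    have h1 := hxb t ω i
    have h2 := hxb t ω j
    have h3 : ‖x t ω i - x t ω j‖ ≤ ‖x t ω i‖ + ‖x t ω j‖ := norm_sub_le _ _
    simp only [hDdef]
    nlinarith
  -- ## measurability and integrability
  have hintb : ∀ (f : Ω → ℝ) (c : ℝ), Measurable f → (∀ ω, |f ω| ≤ c) → Integrable f μ := by
    intro f c hf hb
    exact (integrable_const c).mono' hf.aestronglyMeasurable
      (ae_of_all _ fun ω => by simpa using hb ω)
  have hYmeasF : ∀ (t : ℕ) (i : Fin k), Measurable[F t] fun ω => ‖v t ω i‖ := by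
    intro t i
    letI := F t
    exact ((hvmeas t).eval (a := i)).norm
  have hYmeas : ∀ (t : ℕ) (i : Fin k), Measurable fun ω => ‖v t ω i‖ :=
    fun t i => (hYmeasF t i).mono (hFle t) le_rfl
  have hYint : ∀ (t : ℕ) (i : Fin k), Integrable (fun ω => ‖v t ω i‖) μ := by
    intro t i
    exact hintb _ ‖V0‖ (hYmeas t i)
      (fun ω => by rw [abs_of_nonneg (norm_nonneg _)]; exact hvb t ω i)
  have hInn : ∀ (t : ℕ) (i : Fin k), 0 ≤ ∫ ω, ‖v t ω i‖ ∂μ :=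
    fun t i => integral_nonneg fun ω => norm_nonneg _
  have hIb : ∀ (t : ℕ) (i : Fin k), ∫ ω, ‖v t ω i‖ ∂μ ≤ ‖V0‖ := by
    intro t i
    calc ∫ ω, ‖v t ω i‖ ∂μ ≤ ∫ _ω, ‖V0‖ ∂μ :=
          integral_mono (hYint t i) (integrable_const _) (fun ω => hvb t ω i)
    _ = ‖V0‖ := by simp
  have hameas' : ∀ (t : ℕ) (i : Fin k), ∀ j ∈ L i, Measurable fun ω => a (t+1) ω i j :=
    fun t i j hj => (hameas (t+1) i j hj).mono (hFle (t+1)) le_rfl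
  have haint : ∀ (t : ℕ) (i : Fin k), ∀ j ∈ L i, Integrable (fun ω => a (t+1) ω i j) μ := by
    intro t i j hj
    exact hintb _ 1 (hameas' t i j hj) fun ω =>
      abs_le.mpr ⟨by linarith [ha0 (t+1) ω i j hj], ha1 (t+1) ω i j hj⟩
  have haY : ∀ (t : ℕ) (i : Fin k), ∀ j ∈ L i, ∀ (l : Fin k),
      Integrable (fun ω => a (t+1) ω i j * ‖v t ω l‖) μ := by
    intro t i j hj l
    refine hintb _ ‖V0‖ ((hameas' t i j hj).mul (hYmeas t l)) fun ω => ?_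
    rw [abs_mul, abs_of_nonneg (ha0 (t+1) ω i j hj), abs_of_nonneg (norm_nonneg _)]
    calc a (t+1) ω i j * ‖v t ω l‖ ≤ 1 * ‖V0‖ :=
          mul_le_mul (ha1 (t+1) ω i j hj) (hvb t ω l) (norm_nonneg _) zero_le_one
    _ = ‖V0‖ := one_mul _
  -- ## the conditional–expectation estimate
  have hkey : ∀ (t : ℕ) (i : Fin k), ∀ j ∈ L i,
      p / D t ^ α * ∫ ω, ‖v t ω i‖ ∂μ ≤ ∫ ω, a (t+1) ω i j * ‖v t ω i‖ ∂μ := by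
    intro t i j hj
    have hprodint : Integrable ((fun ω => ‖v t ω i‖) * fun ω => a (t+1) ω i j) μ := by
      have := haY t i j hj i
      refine this.congr (ae_of_all _ fun ω => ?_)
      simp [mul_comm]
    have hpull : μ[(fun ω => ‖v t ω i‖) * (fun ω => a (t+1) ω i j)|F t]
        =ᵐ[μ] (fun ω => ‖v t ω i‖) * μ[fun ω => a (t+1) ω i j|F t] :=
      condExp_mul_of_stronglyMeasurable_left (hYmeasF t i).stronglyMeasurable hprodint (haint t i j hj)
    have hae : (fun ω => p / D t ^ α * ‖v t ω i‖)
        ≤ᵐ[μ] fun ω => ‖v t ω i‖ * (μ[fun ω' => a (t+1) ω' i j|F t]) ω := by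
      filter_upwards [hK t i j hj] with ω hω
      have hle : p / D t ^ α ≤ p / (1 + ‖x t ω i - x t ω j‖) ^ α := by
        refine div_le_div_of_nonneg_left hp0.le (by positivity) ?_
        exact Real.rpow_le_rpow (by positivity) (hxd t ω i j) hα0.le
      calc p / D t ^ α * ‖v t ω i‖
          ≤ (μ[fun ω' => a (t+1) ω' i j|F t]) ω * ‖v t ω i‖ :=
            mul_le_mul_of_nonneg_right (hle.trans hω) (norm_nonneg _)
      _ = ‖v t ω i‖ * (μ[fun ω' => a (t+1) ω' i j|F t]) ω := mul_comm _ _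
    calc p / D t ^ α * ∫ ω, ‖v t ω i‖ ∂μ
        = ∫ ω, p / D t ^ α * ‖v t ω i‖ ∂μ := (integral_const_mul _ _).symm
    _ ≤ ∫ ω, ‖v t ω i‖ * (μ[fun ω' => a (t+1) ω' i j|F t]) ω ∂μ := by
        refine integral_mono_ae ((hYint t i).const_mul _) ?_ hae
        exact integrable_condExp.bdd_mul (c := ‖V0‖) (hYmeas t i).aestronglyMeasurable
          (ae_of_all _ fun ω => by
            rw [Real.norm_eq_abs, abs_of_nonneg (norm_nonneg _)]; exact hvb t ω i)
    _ = ∫ ω, (μ[(fun ω' => ‖v t ω' i‖) * (fun ω' => a (t+1) ω' i j)|F t]) ω ∂μ :=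
        (integral_congr_ae hpull).symm
    _ = ∫ ω, ‖v t ω i‖ * a (t+1) ω i j ∂μ := integral_condExp (hFle t)
    _ = ∫ ω, a (t+1) ω i j * ‖v t ω i‖ ∂μ :=
        integral_congr_ae (ae_of_all _ fun ω => mul_comm _ _)
  -- ## one-step recurrence for expected speeds
  have hrec : ∀ (t : ℕ) (i : Fin k), 1 ≤ i.val →
      ∫ ω, ‖v (t+1) ω i‖ ∂μ ≤ (1 - h * p / D t ^ α) * ∫ ω, ‖v t ω i‖ ∂μ
        + h * ∑ j ∈ (L i).filter (fun j => 1 ≤ j.val), ∫ ω, ‖v t ω j‖ ∂μ := by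
    intro t i hi
    obtain ⟨j0, hj0⟩ := hLne i hi
    have hptw : ∀ ω, ‖v (t+1) ω i‖
        ≤ (‖v t ω i‖ - h * (a (t+1) ω i j0 * ‖v t ω i‖))
          + h * ∑ j ∈ L i, a (t+1) ω i j * ‖v t ω j‖ := by
      intro ω
      refine le_trans (hnorm1 t ω i) ?_
      have hsle : a (t+1) ω i j0 ≤ ∑ j ∈ L i, a (t+1) ω i j :=
        Finset.single_le_sum (fun j hj => ha0 (t+1) ω i j hj) hj0
      have h1 : (1 - h * ∑ j ∈ L i, a (t+1) ω i j) * ‖v t ω i‖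
          ≤ (1 - h * a (t+1) ω i j0) * ‖v t ω i‖ := by
        refine mul_le_mul_of_nonneg_right ?_ (norm_nonneg _)
        have := mul_le_mul_of_nonneg_left hsle hh0.le
        linarith
      have h2 : ∑ j ∈ L i, (h * a (t+1) ω i j) * ‖v t ω j‖
          = h * ∑ j ∈ L i, a (t+1) ω i j * ‖v t ω j‖ := by
        rw [Finset.mul_sum]
        exact Finset.sum_congr rfl fun j hj => by ring
      have h3 : (1 - h * a (t+1) ω i j0) * ‖v t ω i‖
          = ‖v t ω i‖ - h * (a (t+1) ω i j0 * ‖v t ω i‖) := by ring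
      linarith
    have hRint1 : Integrable
        (fun ω => ‖v t ω i‖ - h * (a (t+1) ω i j0 * ‖v t ω i‖)) μ :=
      (hYint t i).sub ((haY t i j0 hj0 i).const_mul h)
    have hRint2 : Integrable
        (fun ω => h * ∑ j ∈ L i, a (t+1) ω i j * ‖v t ω j‖) μ :=
      (integrable_finset_sum _ (fun j hj => haY t i j hj j)).const_mul h
    have hI1 : ∫ ω, ‖v (t+1) ω i‖ ∂μ
        ≤ ∫ ω, ((‖v t ω i‖ - h * (a (t+1) ω i j0 * ‖v t ω i‖))
            + h * ∑ j ∈ L i, a (t+1) ω i j * ‖v t ω j‖) ∂μ :=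
      integral_mono (hYint (t+1) i) (hRint1.add hRint2) hptw
    rw [integral_add hRint1 hRint2, integral_sub (hYint t i) ((haY t i j0 hj0 i).const_mul h),
      integral_const_mul, integral_const_mul,
      integral_finset_sum _ (fun j hj => haY t i j hj j)] at hI1
    have hsum : ∑ j ∈ L i, ∫ ω, a (t+1) ω i j * ‖v t ω j‖ ∂μ
        ≤ ∑ j ∈ (L i).filter (fun j => 1 ≤ j.val), ∫ ω, ‖v t ω j‖ ∂μ := by
      rw [← Finset.sum_filter_add_sum_filter_not (L i) (fun j => 1 ≤ j.val)
        (fun j => ∫ ω, a (t+1) ω i j * ‖v t ω j‖ ∂μ)]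
      have hz : ∑ j ∈ (L i).filter (fun j => ¬ 1 ≤ j.val),
          ∫ ω, a (t+1) ω i j * ‖v t ω j‖ ∂μ = 0 := by
        refine Finset.sum_eq_zero fun j hj => ?_
        obtain ⟨hjL, hj0'⟩ := Finset.mem_filter.mp hj
        have hvj : ∀ ω, v t ω j = 0 := fun ω => hvz t ω j (by omega)
        simp [hvj]
      rw [hz, add_zero]
      refine Finset.sum_le_sum fun j hj => ?_
      obtain ⟨hjL, _⟩ := Finset.mem_filter.mp hj
      refine integral_mono (haY t i j hjL j) (hYint t j) fun ω => ?_
      have h1 := ha1 (t+1) ω i j hjL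
      nlinarith [norm_nonneg (v t ω j), ha0 (t+1) ω i j hjL]
    have hK1 := hkey t i j0 hj0
    have hK2 : h * (p / D t ^ α * ∫ ω, ‖v t ω i‖ ∂μ)
        ≤ h * ∫ ω, a (t+1) ω i j0 * ‖v t ω i‖ ∂μ :=
      mul_le_mul_of_nonneg_left hK1 hh0.le
    have hring : (1 - h * p / D t ^ α) * ∫ ω, ‖v t ω i‖ ∂μ
        = ∫ ω, ‖v t ω i‖ ∂μ - h * (p / D t ^ α * ∫ ω, ‖v t ω i‖ ∂μ) := by ring
    have hsum2 : h * ∑ j ∈ L i, ∫ ω, a (t+1) ω i j * ‖v t ω j‖ ∂μ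
        ≤ h * ∑ j ∈ (L i).filter (fun j => 1 ≤ j.val), ∫ ω, ‖v t ω j‖ ∂μ :=
      mul_le_mul_of_nonneg_left hsum hh0.le
    linarith
  -- ## analytic facts on G
  have hstep : ∀ t : ℕ, κ * D (t+1) ^ (1-α) ≤ κ * D t ^ (1-α) + h * p / D t ^ α := by
    intro t
    have hd := hDpos t
    have hDsucc : D (t+1) = D t * (1 + (2*h*‖V0‖)/D t) := by
      field_simp
      simp only [hDdef]
      push_cast
      ring
    have hs0 : 0 ≤ (2*h*‖V0‖)/D t := by positivity
    have hber : (1 + (2*h*‖V0‖)/D t) ^ (1-α) ≤ 1 + (1-α) * ((2*h*‖V0‖)/D t) :=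
      rpow_one_add_le_one_add_mul_self (by linarith) hβ.le (by linarith)
    have hmul : D (t+1) ^ (1-α) ≤ D t ^ (1-α) * (1 + (1-α) * ((2*h*‖V0‖)/D t)) := by
      rw [hDsucc, Real.mul_rpow hd.le (by positivity)]
      exact mul_le_mul_of_nonneg_left hber (Real.rpow_nonneg hd.le _)
    have hdd : D t ^ (1-α) * D t ^ α = D t := by
      rw [← Real.rpow_add hd]
      norm_num
    have hfrac : D t ^ (1-α) / D t = 1 / D t ^ α := by
      rw [div_eq_div_iff hd.ne' (Real.rpow_pos_of_pos hd α).ne', one_mul, hdd]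
    have hκβ : κ * ((1-α) * (2*h*‖V0‖)) = h * p := by
      rw [hκdef]
      field_simp
    have hexp : κ * (D t ^ (1-α) * (1 + (1-α) * ((2*h*‖V0‖)/D t)))
        = κ * D t ^ (1-α) + (κ * ((1-α) * (2*h*‖V0‖))) * (D t ^ (1-α) / D t) := by
      field_simp
    calc κ * D (t+1) ^ (1-α)
        ≤ κ * (D t ^ (1-α) * (1 + (1-α) * ((2*h*‖V0‖)/D t))) :=
          mul_le_mul_of_nonneg_left hmul hκ0.le
    _ = κ * D t ^ (1-α) + (κ * ((1-α) * (2*h*‖V0‖))) * (D t ^ (1-α) / D t) := hexp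
    _ = κ * D t ^ (1-α) + h * p / D t ^ α := by
        rw [hκβ, hfrac]
        ring
  have hG1 : ∀ t : ℕ, (1 - h * p / D t ^ α) * G t ≤ G (t+1) := by
    intro t
    have hstep' := hstep t
    calc (1 - h * p / D t ^ α) * G t
        ≤ Real.exp (-(h * p / D t ^ α)) * G t := by
          refine mul_le_mul_of_nonneg_right ?_ (hGpos t).le
          linarith [Real.add_one_le_exp (-(h * p / D t ^ α))]
    _ = Real.exp (-(h * p / D t ^ α) + -κ * D t ^ (1-α)) := by
          simp only [hGdef]
          rw [← Real.exp_add]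
    _ ≤ G (t+1) := by
          simp only [hGdef]
          refine Real.exp_le_exp.mpr ?_
          nlinarith
  have hG2 : ∀ t : ℕ, G t ≤ Real.exp (h*p) * G (t+1) := by
    intro t
    have hstep' := hstep t
    have hqle := hqhp t
    calc G t = Real.exp (-κ * D t ^ (1-α)) := rfl
    _ ≤ Real.exp (h*p + -κ * D (t+1) ^ (1-α)) := by
        refine Real.exp_le_exp.mpr ?_
        nlinarith
    _ = Real.exp (h*p) * G (t+1) := by
        simp only [hGdef]
        rw [Real.exp_add]
  have hpow : ∀ n : ℕ, 1 ≤ n → ∀ r : ℝ, 1 ≤ r → r ^ n + r ^ (n-1) ≤ (r+1) ^ n := by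
    intro n hn
    induction n with
    | zero => omega
    | succ m IHm =>
      intro r hr
      have hr0 : (0:ℝ) ≤ r := by linarith
      rcases Nat.eq_zero_or_pos m with hm | hm
      · subst hm; norm_num
      · have hge := IHm hm r hr
        have e1 : r ^ (m-1) * r = r ^ m := by
          rw [← pow_succ]
          congr 1
          omega
        have hps : (r+1) ^ (m+1) = (r+1) ^ m * (r+1) := pow_succ _ _
        have hps2 : r ^ (m+1) = r ^ m * r := pow_succ _ _
        have h1 : (0:ℝ) ≤ r ^ m := pow_nonneg hr0 _
        have h2 : (0:ℝ) ≤ r ^ (m-1) := pow_nonneg hr0 _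
        have hmul := mul_le_mul_of_nonneg_right hge (by linarith : (0:ℝ) ≤ r + 1)
        simp only [Nat.add_sub_cancel]
        nlinarith
  -- ## main double induction
  suffices Hmain : ∀ N : ℕ, ∀ ℓ : Fin k, ℓ.val = N → 1 ≤ ℓ.val →
      ∃ C : ℝ, 0 < C ∧ ∀ t : ℕ, 1 ≤ t →
        ∫ ω, ‖v t ω ℓ‖ ∂μ ≤ C * (t:ℝ) ^ (ℓ.val - 1) * G t by
    intro ℓ hℓ
    obtain ⟨C, hC, hCb⟩ := Hmain ℓ.val ℓ rfl hℓ
    exact ⟨C, hC, fun t ht => hCb t ht⟩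
  intro N
  induction N using Nat.strong_induction_on with
  | _ N IH =>
    intro ℓ hℓN hℓ1
    set n := ℓ.val - 1 with hn
    set L' := (L ℓ).filter (fun j => 1 ≤ j.val) with hL'
    have hIHj : ∀ j ∈ L', ∃ C : ℝ, 0 < C ∧ ∀ t : ℕ, 1 ≤ t →
        ∫ ω, ‖v t ω j‖ ∂μ ≤ C * (t:ℝ) ^ (j.val - 1) * G t := by
      intro j hj
      obtain ⟨hjL, hj1⟩ := Finset.mem_filter.mp hj
      have hjlt : j.val < N := by
        rw [← hℓN]
        exact (Fin.lt_def.mp (hLlt ℓ j hjL))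
      exact IH j.val hjlt j rfl hj1
    choose! Cf hCf0 hCfb using hIHj
    set C' := ∑ j ∈ L', Cf j with hC'
    have hC'nn : 0 ≤ C' := Finset.sum_nonneg fun j hj => (hCf0 j hj).le
    set C := max (h * C' * Real.exp (h*p)) (‖V0‖ / G 1) + 1 with hCdef
    have hCmax0 : 0 ≤ max (h * C' * Real.exp (h*p)) (‖V0‖ / G 1) :=
      le_trans (by positivity) (le_max_right _ _)
    have hCpos : 0 < C := by rw [hCdef]; linarith
    have hCge1 : h * C' * Real.exp (h*p) ≤ C := by
      rw [hCdef]
      have := le_max_left (h * C' * Real.exp (h*p)) (‖V0‖ / G 1)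
      linarith
    have hCge2 : ‖V0‖ / G 1 ≤ C := by
      rw [hCdef]
      have := le_max_right (h * C' * Real.exp (h*p)) (‖V0‖ / G 1)
      linarith
    refine ⟨C, hCpos, ?_⟩
    intro t ht
    induction t, ht using Nat.le_induction with
    | base =>
      have hV0C : ‖V0‖ ≤ C * G 1 := by
        rw [div_le_iff₀ (hGpos 1)] at hCge2
        linarith
      calc ∫ ω, ‖v 1 ω ℓ‖ ∂μ ≤ ‖V0‖ := hIb 1 ℓ
      _ ≤ C * G 1 := hV0C
      _ = C * ((1:ℕ):ℝ) ^ n * G 1 := by norm_num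
    | succ t ht IHt =>
      have ht1 : (1:ℝ) ≤ (t:ℝ) := by exact_mod_cast ht
      have hrec' := hrec t ℓ hℓ1
      rw [← hL'] at hrec'
      have hq0' := hq0 t
      have hq1' := hq1 t
      rcases Nat.eq_zero_or_pos n with hn0 | hn1
      · -- base bird: L' is empty
        have hℓv : ℓ.val = 1 := by omega
        have hL'e : L' = ∅ := by
          rw [hL', Finset.filter_eq_empty_iff]
          intro j hj
          have := Fin.lt_def.mp (hLlt ℓ j hj)
          omega
        rw [hL'e] at hrec'
        simp only [Finset.sum_empty, mul_zero, add_zero] at hrec'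
        have hb1 : ∫ ω, ‖v t ω ℓ‖ ∂μ ≤ C * G t := by
          have := IHt
          rw [hn0] at this
          simpa using this
        calc ∫ ω, ‖v (t+1) ω ℓ‖ ∂μ
            ≤ (1 - h * p / D t ^ α) * ∫ ω, ‖v t ω ℓ‖ ∂μ := hrec'
        _ ≤ (1 - h * p / D t ^ α) * (C * G t) := by
            refine mul_le_mul_of_nonneg_left hb1 (by linarith)
        _ = C * ((1 - h * p / D t ^ α) * G t) := by ring
        _ ≤ C * G (t+1) := mul_le_mul_of_nonneg_left (hG1 t) hCpos.le
        _ = C * (((t+1:ℕ)):ℝ) ^ n * G (t+1) := by rw [hn0]; norm_num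
      · -- inductive bird
        have hsum' : ∑ j ∈ L', ∫ ω, ‖v t ω j‖ ∂μ ≤ C' * (t:ℝ) ^ (n-1) * G t := by
          rw [hC', Finset.sum_mul, Finset.sum_mul]
          refine Finset.sum_le_sum fun j hj => ?_
          obtain ⟨hjL, hj1⟩ := Finset.mem_filter.mp (by rwa [hL'] at hj)
          have hjn : j.val - 1 ≤ n - 1 := by
            have := Fin.lt_def.mp (hLlt ℓ j hjL)
            omega
          calc ∫ ω, ‖v t ω j‖ ∂μ ≤ Cf j * (t:ℝ) ^ (j.val - 1) * G t := hCfb j hj t ht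
          _ ≤ Cf j * (t:ℝ) ^ (n-1) * G t := by
              refine mul_le_mul_of_nonneg_right ?_ (hGpos t).le
              refine mul_le_mul_of_nonneg_left ?_ (hCf0 j hj).le
              exact pow_le_pow_right₀ ht1 hjn
        have hpnn : (0:ℝ) ≤ (t:ℝ) ^ n := by positivity
        have hpnn1 : (0:ℝ) ≤ (t:ℝ) ^ (n-1) := by positivity
        calc ∫ ω, ‖v (t+1) ω ℓ‖ ∂μ
            ≤ (1 - h * p / D t ^ α) * ∫ ω, ‖v t ω ℓ‖ ∂μ
              + h * ∑ j ∈ L', ∫ ω, ‖v t ω j‖ ∂μ := hrec'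
        _ ≤ (1 - h * p / D t ^ α) * (C * (t:ℝ) ^ n * G t)
              + h * (C' * (t:ℝ) ^ (n-1) * G t) := by
            refine add_le_add ?_ (mul_le_mul_of_nonneg_left hsum' hh0.le)
            exact mul_le_mul_of_nonneg_left IHt (by linarith)
        _ = C * (t:ℝ) ^ n * ((1 - h * p / D t ^ α) * G t)
              + (h * C' * (t:ℝ) ^ (n-1)) * G t := by ring
        _ ≤ C * (t:ℝ) ^ n * G (t+1)
              + (h * C' * (t:ℝ) ^ (n-1)) * (Real.exp (h*p) * G (t+1)) := by
            refine add_le_add ?_ ?_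
            · exact mul_le_mul_of_nonneg_left (hG1 t)
                (mul_nonneg hCpos.le hpnn)
            · exact mul_le_mul_of_nonneg_left (hG2 t)
                (by positivity)
        _ = C * (t:ℝ) ^ n * G (t+1)
              + (h * C' * Real.exp (h*p)) * ((t:ℝ) ^ (n-1) * G (t+1)) := by ring
        _ ≤ C * (t:ℝ) ^ n * G (t+1) + C * ((t:ℝ) ^ (n-1) * G (t+1)) := by
            refine add_le_add_right ?_ _
            exact mul_le_mul_of_nonneg_right hCge1
              (mul_nonneg hpnn1 (hGpos _).le)
        _ = C * ((t:ℝ) ^ n + (t:ℝ) ^ (n-1)) * G (t+1) := by ring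
        _ ≤ C * ((t:ℝ) + 1) ^ n * G (t+1) := by
            refine mul_le_mul_of_nonneg_right ?_ (hGpos _).le
            exact mul_le_mul_of_nonneg_left (hpow n hn1 (t:ℝ) ht1) hCpos.le
        _ = C * (((t+1:ℕ)):ℝ) ^ n * G (t+1) := by push_cast; ring
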